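/- arXiv:1605.09202 — 2 statements merged into one kernel-verified Lean document; each statement's English description precedes it below -/
import Mathlib

section
/- Geometric-exponent inequality (LP duality bound): let β ≥ 2 and n ≥ 2 be integers and let 0 = e_1 < e_2 < … < e_n be integers. With σ_k = Σ_{i=1}^k β^{e_i} and v_k = σ_k/σ_n, one has Σ_{k=1}^{n−1} v_k ≤ 1/(β−1) − n/(β^n − 1), with equality when e_k = k − 1. -/
noncomputable section

/-- The set of positive normal floating point numbers with exponent `e`. -/
def Eset (β μ : ℕ) (e : ℤ) : Set ℝ :=
  {x | ∃ r : ℕ, r < (β - 1) * β ^ μ ∧ x = (β : ℝ) ^ e * ((β : ℝ) ^ μ + r)}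

/-- Perfect floating point system: all integer exponents. -/
def PerfectF (β μ : ℕ) : Set ℝ :=
  {x | x = 0 ∨ ∃ e : ℤ, x ∈ Eset β μ e ∨ -x ∈ Eset β μ e}

/-- MPFR system: exponents bounded below by `emin`, no subnormals. -/
def MPFRF (β μ : ℕ) (emin : ℤ) : Set ℝ :=
  {x | x = 0 ∨ ∃ e : ℤ, emin ≤ e ∧ (x ∈ Eset β μ e ∨ -x ∈ Eset β μ e)}

/-- Subnormal numbers (both signs) for minimal exponent `emin`. -/
def SubN (β μ : ℕ) (emin : ℤ) : Set ℝ :=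
  {x | ∃ r : ℕ, 1 ≤ r ∧ r < β ^ μ ∧ (x = (β : ℝ) ^ emin * r ∨ x = -((β : ℝ) ^ emin * r))}

/-- IEEE system: MPFR system augmented with subnormal numbers. -/
def IEEEF (β μ : ℕ) (emin : ℤ) : Set ℝ := MPFRF β μ emin ∪ SubN β μ emin

/-- `fl` rounds to nearest in `F`. -/
def RTN (F : Set ℝ) (fl : ℝ → ℝ) : Prop :=
  ∀ z : ℝ, fl z ∈ F ∧ ∀ x ∈ F, |fl z - z| ≤ |x - z|

/-- Recursively rounded sum: `rsum fl y 0 = y 0`,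
`rsum fl y (k+1) = fl (k+1) (rsum fl y k + y (k+1))`. -/
def rsum (fl : ℕ → ℝ → ℝ) (y : ℕ → ℝ) : ℕ → ℝ
  | 0 => y 0
  | k + 1 => fl (k + 1) (rsum fl y k + y (k + 1))

/-- Ties are broken downward. -/
def BreaksTiesDown (F : Set ℝ) (fl : ℝ → ℝ) : Prop :=
  ∀ z : ℝ, ∀ x ∈ F, |x - z| = |fl z - z| → fl z ≤ x

/-- Ties are broken upward. -/
def BreaksTiesUp (F : Set ℝ) (fl : ℝ → ℝ) : Prop :=
  ∀ z : ℝ, ∀ x ∈ F, |x - z| = |fl z - z| → x ≤ fl z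

/-
Write `s k = ∑_{i ≤ k} β ^ e i`. Since `e (k+1) ≥ e k + 1`, induction on `k` gives
`β^k (β - 1) s k ≤ (β^k - 1) β^(e k + 1) ≤ (β^k - 1) β^(e (k+1))`, which says exactly that
`s k / s (k+1) ≤ (β^k - 1) / (β^(k+1) - 1)`. Telescoping yields `v k ≤ (β^k - 1) / (β^n - 1)`,
with equality for `e k = k - 1`, and these bounds sum to `1 / (β - 1) - n / (β^n - 1)`.
-/

open Finset

theorem sum_Icc_one_eq_sum_range {M : Type*} [AddCommMonoid M] (f : ℕ → M) (m : ℕ) :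
    ∑ i ∈ Icc 1 m, f i = ∑ i ∈ range m, f (i + 1) := by
  induction m with
  | zero => simp
  | succ m ih => rw [sum_Icc_succ_top (by omega), ih, sum_range_succ]

section Geometric

variable {K : Type*} [Field K]

theorem sum_Icc_one_zpow_sub_one (b : K) (hb : b ≠ 1) (k : ℕ) :
    ∑ i ∈ Icc 1 k, b ^ ((i : ℤ) - 1) = (b ^ k - 1) / (b - 1) := by
  rw [sum_Icc_one_eq_sum_range, ← geom_sum_eq hb]
  refine sum_congr rfl fun i _ => ?_
  rw [Nat.cast_succ, add_sub_cancel_right, zpow_natCast]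

theorem sum_Icc_one_pred_pow_sub_one (b : K) (hb : b ≠ 1) (n : ℕ) :
    ∑ k ∈ Icc 1 (n - 1), (b ^ k - 1) = (b ^ n - 1) / (b - 1) - n := by
  rcases n with _ | m
  · simp
  · rw [Nat.add_sub_cancel, sum_Icc_one_eq_sum_range, ← geom_sum_eq hb]
    simp [sum_range_succ', sum_sub_distrib]

theorem sum_Icc_one_pred_pow_sub_one_div (b : K) (hb : b ≠ 1) {n : ℕ} (hbn : b ^ n ≠ 1) :
    ∑ k ∈ Icc 1 (n - 1), (b ^ k - 1) / (b ^ n - 1) = 1 / (b - 1) - n / (b ^ n - 1) := by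
  rw [← sum_div, sum_Icc_one_pred_pow_sub_one b hb, sub_div, div_right_comm,
    div_self (sub_ne_zero.2 hbn)]

end Geometric

section Ordered

variable {K : Type*} [Field K] [LinearOrder K] [IsStrictOrderedRing K]
  {b : K} {e : ℕ → ℤ} {n : ℕ}

theorem pow_mul_sub_one_mul_sum_zpow_le (hb : 1 ≤ b)
    (hmono : ∀ i, 1 ≤ i → i < n → e i < e (i + 1)) {k : ℕ} (hk : 1 ≤ k) (hkn : k ≤ n) :
    b ^ k * (b - 1) * ∑ i ∈ Icc 1 k, b ^ e i ≤ (b ^ k - 1) * b ^ (e k + 1) := by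
  have hb0 : b ≠ 0 := by positivity
  induction k, hk using Nat.le_induction with
  | base => rw [Icc_self, sum_singleton, zpow_add_one₀ hb0]; exact le_of_eq (by ring)
  | succ k hk ih =>
    have ih := ih (by omega)
    have hle : b ^ (e k + 1) ≤ b ^ e (k + 1) := zpow_le_zpow_right₀ hb (hmono k hk hkn)
    have hbk : 0 ≤ b ^ k - 1 := sub_nonneg.2 (one_le_pow₀ hb)
    rw [sum_Icc_succ_top (by omega), zpow_add_one₀ hb0, pow_succ]
    nlinarith [mul_le_mul_of_nonneg_left hle hbk]

theorem sum_zpow_mul_pow_succ_sub_one_le (hb : 1 ≤ b)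
    (hmono : ∀ i, 1 ≤ i → i < n → e i < e (i + 1)) {k : ℕ} (hk : 1 ≤ k) (hkn : k < n) :
    (∑ i ∈ Icc 1 k, b ^ e i) * (b ^ (k + 1) - 1) ≤
      (b ^ k - 1) * ∑ i ∈ Icc 1 (k + 1), b ^ e i := by
  have hs := pow_mul_sub_one_mul_sum_zpow_le hb hmono hk hkn.le
  have hle : b ^ (e k + 1) ≤ b ^ e (k + 1) := zpow_le_zpow_right₀ hb (hmono k hk hkn)
  have hbk : 0 ≤ b ^ k - 1 := sub_nonneg.2 (one_le_pow₀ hb)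
  rw [sum_Icc_succ_top (by omega), pow_succ]
  nlinarith [mul_le_mul_of_nonneg_left hle hbk]

theorem sum_zpow_mul_pow_sub_one_le (hb : 1 < b)
    (hmono : ∀ i, 1 ≤ i → i < n → e i < e (i + 1)) {k m : ℕ} (hk : 1 ≤ k) (hkm : k ≤ m)
    (hmn : m ≤ n) :
    (∑ i ∈ Icc 1 k, b ^ e i) * (b ^ m - 1) ≤ (b ^ k - 1) * ∑ i ∈ Icc 1 m, b ^ e i := by
  induction m, hkm using Nat.le_induction with
  | base => rw [mul_comm]
  | succ m hkm ih =>
    have ih := ih (by omega)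
    have step := sum_zpow_mul_pow_succ_sub_one_le hb.le hmono (hk.trans hkm) hmn
    have hbm : 0 < b ^ m - 1 := sub_pos.2 (one_lt_pow₀ hb (by omega))
    have hbk : 0 ≤ b ^ k - 1 := sub_nonneg.2 (one_le_pow₀ hb.le)
    have hbm1 : 0 ≤ b ^ (m + 1) - 1 := sub_nonneg.2 (one_le_pow₀ hb.le)
    refine le_of_mul_le_mul_right ?_ hbm
    calc (∑ i ∈ Icc 1 k, b ^ e i) * (b ^ (m + 1) - 1) * (b ^ m - 1)
        = (∑ i ∈ Icc 1 k, b ^ e i) * (b ^ m - 1) * (b ^ (m + 1) - 1) := by ring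
      _ ≤ (b ^ k - 1) * (∑ i ∈ Icc 1 m, b ^ e i) * (b ^ (m + 1) - 1) :=
        mul_le_mul_of_nonneg_right ih hbm1
      _ ≤ (b ^ k - 1) * ((b ^ m - 1) * ∑ i ∈ Icc 1 (m + 1), b ^ e i) := by
        rw [mul_assoc]; exact mul_le_mul_of_nonneg_left step hbk
      _ = (b ^ k - 1) * (∑ i ∈ Icc 1 (m + 1), b ^ e i) * (b ^ m - 1) := by ring

theorem sum_zpow_div_sum_zpow_le (hb : 1 < b)
    (hmono : ∀ i, 1 ≤ i → i < n → e i < e (i + 1)) {k : ℕ} (hk : 1 ≤ k) (hkn : k ≤ n) :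
    (∑ i ∈ Icc 1 k, b ^ e i) / (∑ i ∈ Icc 1 n, b ^ e i) ≤ (b ^ k - 1) / (b ^ n - 1) := by
  have hsum : 0 < ∑ i ∈ Icc 1 n, b ^ e i :=
    sum_pos (fun i _ => zpow_pos (by positivity) _) (nonempty_Icc.2 (hk.trans hkn))
  rw [div_le_div_iff₀ hsum (sub_pos.2 (one_lt_pow₀ hb (by omega)))]
  exact sum_zpow_mul_pow_sub_one_le hb hmono hk hkn le_rfl

end Ordered

theorem stmt18_general (β n : ℕ) (hβ : 2 ≤ β) (hn : 2 ≤ n)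
    (e : ℕ → ℤ) (hmono : ∀ i, 1 ≤ i → i < n → e i < e (i + 1)) :
    (∑ k ∈ Finset.Icc 1 (n - 1),
        (∑ i ∈ Finset.Icc 1 k, (β : ℝ) ^ (e i)) / (∑ i ∈ Finset.Icc 1 n, (β : ℝ) ^ (e i)))
      ≤ 1 / ((β : ℝ) - 1) - (n : ℝ) / ((β : ℝ) ^ n - 1) ∧
    ((∀ k, 1 ≤ k → k ≤ n → e k = (k : ℤ) - 1) →
      (∑ k ∈ Finset.Icc 1 (n - 1),
        (∑ i ∈ Finset.Icc 1 k, (β : ℝ) ^ (e i)) / (∑ i ∈ Finset.Icc 1 n, (β : ℝ) ^ (e i)))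
        = 1 / ((β : ℝ) - 1) - (n : ℝ) / ((β : ℝ) ^ n - 1)) := by
  have hb : (1 : ℝ) < β := by exact_mod_cast hβ
  rw [← sum_Icc_one_pred_pow_sub_one_div _ hb.ne' (one_lt_pow₀ hb (by omega)).ne']
  refine ⟨sum_le_sum fun k hk => ?_, fun he => sum_congr rfl fun k hk => ?_⟩
  · exact sum_zpow_div_sum_zpow_le hb hmono (mem_Icc.1 hk).1 (by grind)
  · have hgeom : ∀ m ≤ n, ∑ i ∈ Icc 1 m, (β : ℝ) ^ e i = ((β : ℝ) ^ m - 1) / ((β : ℝ) - 1) :=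
      fun m hm => by
        rw [← sum_Icc_one_zpow_sub_one _ hb.ne']
        exact sum_congr rfl fun i hi => by rw [he i (mem_Icc.1 hi).1 ((mem_Icc.1 hi).2.trans hm)]
    rw [hgeom k (by grind), hgeom n le_rfl, div_div_div_cancel_right₀ (sub_ne_zero.2 hb.ne')]

theorem stmt18 (β n : ℕ) (hβ : 2 ≤ β) (hn : 2 ≤ n)
    (e : ℕ → ℤ) (he1 : e 1 = 0) (hmono : ∀ i, 1 ≤ i → i < n → e i < e (i + 1)) :
    (∑ k ∈ Finset.Icc 1 (n - 1),
        (∑ i ∈ Finset.Icc 1 k, (β : ℝ) ^ (e i)) / (∑ i ∈ Finset.Icc 1 n, (β : ℝ) ^ (e i)))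
      ≤ 1 / ((β : ℝ) - 1) - (n : ℝ) / ((β : ℝ) ^ n - 1) ∧
    ((∀ k, 1 ≤ k → k ≤ n → e k = (k : ℤ) - 1) →
      (∑ k ∈ Finset.Icc 1 (n - 1),
        (∑ i ∈ Finset.Icc 1 k, (β : ℝ) ^ (e i)) / (∑ i ∈ Finset.Icc 1 n, (β : ℝ) ^ (e i)))
        = 1 / ((β : ℝ) - 1) - (n : ℝ) / ((β : ℝ) ^ n - 1)) :=
  stmt18_general β n hβ hn e hmono
end
end

section
/- Dot product bound in a perfect system: let fl_1,…,fl_n and r_0,…,r_n round to nearest in a perfect system with unit roundoff u and 20nu ≤ 1. Define p_k = r_k(x_k y_k) and let d̂ be the recursively rounded sum of p_0,…,p_n. Then |d̂ − Σ_{k=0}^n x_k y_k| ≤ β_n u Σ_{k=0}^n |x_k y_k| ≤ (n+1)u Σ_{k=0}^n |x_k y_k|, where β_n = (n + 1 + 3nu)/(1 + (n+1)u + nu²). -/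
/-!
In a perfect system the floats in `[β^E, β^(E+1)]` are spaced `2 u β^E` apart and `β^E` is
itself a float, so rounding `z` with `β^E ≤ |z| < β^(E+1)` errs by at most
`min (u β^E) (|z| - β^E)`, which is at most `u / (1 + u) * |z|`. In the recursive sum, the step
adding `p_k` also errs by at most `|p_k|`, because the previous partial sum is a float. Charging
all step errors to the first step whose argument has maximal exponent yields
`|d̂ - ∑ p_k| ≤ n u / (1 + n u) ∑ |p_k|`, and adding the errors
`|p_k - x_k y_k| ≤ u / (1 + u) |x_k y_k|` of the products gives the constant `β_n u`.
-/

noncomputable section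

open Finset

section PerfectSystem

variable {β μ : ℕ}

lemma zero_mem_perfectF : (0 : ℝ) ∈ PerfectF β μ := Or.inl rfl

lemma neg_mem_perfectF {x : ℝ} (hx : x ∈ PerfectF β μ) : -x ∈ PerfectF β μ := by
  rcases hx with rfl | ⟨e, h | h⟩
  · exact Or.inl neg_zero
  · exact Or.inr ⟨e, Or.inr (by rwa [neg_neg])⟩
  · exact Or.inr ⟨e, Or.inl h⟩

lemma zpow_add_mul_mem_perfectF (hβ : 2 ≤ β) (E : ℤ) {j : ℕ} (hj : j ≤ (β - 1) * β ^ μ) :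
    (β : ℝ) ^ E + j * (β : ℝ) ^ (E - μ) ∈ PerfectF β μ := by
  have hβ0 : (β : ℝ) ≠ 0 := by positivity
  have hE : (β : ℝ) ^ E = (β : ℝ) ^ (E - μ) * (β : ℝ) ^ μ := by
    rw [← zpow_natCast, ← zpow_add₀ hβ0, sub_add_cancel]
  rcases hj.lt_or_eq with hj | rfl
  · exact Or.inr ⟨E - μ, Or.inl ⟨j, hj, by rw [hE]; ring⟩⟩
  · have hE1 : (β : ℝ) ^ (E + 1 - μ) = (β : ℝ) ^ (E - μ) * β := by
      rw [← zpow_add_one₀ hβ0]; ring_nf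
    refine Or.inr ⟨E + 1 - μ, Or.inl ⟨0, Nat.mul_pos (by omega) (by positivity), ?_⟩⟩
    push_cast [Nat.cast_sub (by omega : 1 ≤ β)]
    rw [hE, hE1]
    ring

lemma zpow_mem_perfectF (hβ : 2 ≤ β) (E : ℤ) : (β : ℝ) ^ E ∈ PerfectF β μ := by
  simpa using zpow_add_mul_mem_perfectF (μ := μ) hβ E (Nat.zero_le _)

lemma exists_mem_perfectF_abs_sub_le (hβ : 2 ≤ β) {u : ℝ} (hu : u = 1 / (2 * (β : ℝ) ^ μ))
    {z : ℝ} (hz : 0 < z) : ∃ g ∈ PerfectF β μ, |g - z| ≤ u * (β : ℝ) ^ Int.log β z := by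
  set E := Int.log β z
  set s : ℝ := (β : ℝ) ^ (E - μ)
  set N : ℕ := (β - 1) * β ^ μ
  have hβ0 : (0 : ℝ) < β := by positivity
  have hs : 0 < s := by positivity
  have hlo : (β : ℝ) ^ E ≤ z := Int.zpow_log_le_self (by omega) hz
  have hhi : z < (β : ℝ) ^ (E + 1) := Int.lt_zpow_succ_log_self (by omega) z
  have hbinade : (β : ℝ) ^ (E + 1) = (β : ℝ) ^ E + N * s := by
    have hE : (β : ℝ) ^ E = s * (β : ℝ) ^ μ := by
      rw [← zpow_natCast, ← zpow_add₀ hβ0.ne', sub_add_cancel]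
    simp only [N]
    push_cast [Nat.cast_sub (by omega : 1 ≤ β)]
    rw [zpow_add_one₀ hβ0.ne', hE]
    ring
  set x := (z - (β : ℝ) ^ E) / s
  have hzx : z = (β : ℝ) ^ E + x * s := by
    simp only [x]; field_simp; ring
  have hx0 : 0 ≤ x := div_nonneg (by linarith) hs.le
  have hxN : x < N := by
    rw [div_lt_iff₀ hs]; linarith
  set j := ⌊x + 1 / 2⌋₊
  have hj_le : (j : ℝ) ≤ x + 1 / 2 := Nat.floor_le (by linarith)
  have hj_gt : x + 1 / 2 < j + 1 := Nat.lt_floor_add_one _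
  have hjN : j ≤ N := Nat.lt_succ_iff.mp <| (Nat.floor_lt (by linarith)).2 (by push_cast; linarith)
  refine ⟨_, zpow_add_mul_mem_perfectF hβ E hjN, ?_⟩
  have hsu : s = 2 * u * (β : ℝ) ^ E := by
    rw [hu, show s = (β : ℝ) ^ (E - μ) from rfl, zpow_sub₀ hβ0.ne', zpow_natCast]; field_simp
  rw [hzx, show (β : ℝ) ^ E + j * s - ((β : ℝ) ^ E + x * s) = (j - x) * s by ring, abs_mul,
    abs_of_pos hs, hsu]
  have hjx : |(j : ℝ) - x| ≤ 1 / 2 := abs_le.2 ⟨by linarith, by linarith⟩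
  nlinarith [abs_nonneg ((j : ℝ) - x), show 0 ≤ u * (β : ℝ) ^ E by rw [hu]; positivity]

end PerfectSystem

section RoundToNearest

variable {β μ : ℕ} {fl : ℝ → ℝ}

lemma RTN.map_zero {F : Set ℝ} (hfl : RTN F fl) (h0 : (0 : ℝ) ∈ F) : fl 0 = 0 := by
  simpa using (hfl 0).2 0 h0

lemma RTN.abs_add_sub_le {F : Set ℝ} (hfl : RTN F fl) {a : ℝ} (ha : a ∈ F) (b : ℝ) :
    |fl (a + b) - (a + b)| ≤ |b| := by
  simpa using (hfl (a + b)).2 a ha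

lemma RTN.abs_sub_le_abs_sub_abs (hfl : RTN (PerfectF β μ) fl) {g : ℝ} (hg : g ∈ PerfectF β μ)
    (z : ℝ) : |fl z - z| ≤ abs (g - |z|) := by
  rcases le_or_gt 0 z with hz | hz
  · simpa [abs_of_nonneg hz] using (hfl z).2 g hg
  · calc |fl z - z| ≤ |-g - z| := (hfl z).2 (-g) (neg_mem_perfectF hg)
      _ = abs (g - |z|) := by rw [abs_of_neg hz, ← abs_neg]; ring_nf

lemma RTN.abs_sub_le_mul_zpow_log (hβ : 2 ≤ β) {u : ℝ} (hu : u = 1 / (2 * (β : ℝ) ^ μ))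
    (hfl : RTN (PerfectF β μ) fl) {z : ℝ} (hz : z ≠ 0) :
    |fl z - z| ≤ u * (β : ℝ) ^ Int.log β |z| := by
  obtain ⟨g, hg, hgz⟩ := exists_mem_perfectF_abs_sub_le hβ hu (abs_pos.2 hz)
  exact (hfl.abs_sub_le_abs_sub_abs hg z).trans hgz

lemma RTN.abs_sub_le_abs_sub_zpow_log (hβ : 2 ≤ β) (hfl : RTN (PerfectF β μ) fl) {z : ℝ}
    (hz : z ≠ 0) : |fl z - z| ≤ |z| - (β : ℝ) ^ Int.log β |z| := by
  have hlo : (β : ℝ) ^ Int.log β |z| ≤ |z| := Int.zpow_log_le_self (by omega) (abs_pos.2 hz)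
  calc |fl z - z| ≤ abs ((β : ℝ) ^ Int.log β |z| - |z|) :=
        hfl.abs_sub_le_abs_sub_abs (zpow_mem_perfectF hβ _) z
    _ = |z| - (β : ℝ) ^ Int.log β |z| := by rw [abs_sub_comm, abs_of_nonneg (by linarith)]

lemma RTN.abs_sub_le_div_one_add_mul (hβ : 2 ≤ β) {u : ℝ} (hu : u = 1 / (2 * (β : ℝ) ^ μ))
    (hfl : RTN (PerfectF β μ) fl) (z : ℝ) : |fl z - z| ≤ u / (1 + u) * |z| := by
  rcases eq_or_ne z 0 with rfl | hz
  · simp [hfl.map_zero zero_mem_perfectF]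
  have hu0 : 0 < u := by rw [hu]; positivity
  have h₁ := hfl.abs_sub_le_mul_zpow_log hβ hu hz
  have h₂ := hfl.abs_sub_le_abs_sub_zpow_log hβ hz
  set V := (β : ℝ) ^ Int.log β |z|
  rw [div_mul_eq_mul_div, le_div_iff₀ (by linarith)]
  -- the two bounds `u * V` and `|z| - V` cross at `|z| = (1 + u) * V`
  rcases le_total ((1 + u) * V) |z| with hc | hc <;> nlinarith

end RoundToNearest

lemma Finset.exists_mem_forall_le_forall_lt_lt {ι α : Type*} [LinearOrder ι] [LinearOrder α]
    (s : Finset ι) (f : ι → α) (hs : s.Nonempty) :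
    ∃ m ∈ s, (∀ k ∈ s, f k ≤ f m) ∧ ∀ k ∈ s, k < m → f k < f m := by
  obtain ⟨a, ha, hmax⟩ := s.exists_max_image f hs
  obtain ⟨m, hm, hmin⟩ := (s.filter (f · = f a)).exists_min_image id ⟨a, mem_filter.2 ⟨ha, rfl⟩⟩
  rw [mem_filter] at hm
  refine ⟨m, hm.1, fun k hk => hm.2 ▸ hmax k hk, fun k hk hkm => (hm.2 ▸ hmax k hk).lt_of_ne ?_⟩
  exact fun h => hkm.not_ge (hmin k (mem_filter.2 ⟨hk, h.trans hm.2⟩))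

/-- The charging argument of the summation bound, for `e k` the error of step `k`, `a k = |p_k|`
and `V = β^M` with `M` the largest exponent of a rounded argument, first reached at step `m`:
earlier steps have smaller exponents and cost at most `u V / 2` each, step `m` is paid for by the
partial sum it rounds, and later steps cost at most the summand they add. -/
lemma sum_le_of_first_max {e a : ℕ → ℝ} {m n : ℕ} (hmn : m < n) {u V : ℝ} (hu : 0 ≤ u)
    (hnu : 2 * n * u ≤ 1) (he : ∀ k, 0 ≤ e k) (hpre : ∀ k < m, e k ≤ u * V / 2)
    (hle : ∀ k < n, e k ≤ u * V)
    (hm : V + e m ≤ ∑ k ∈ range (m + 2), a k + ∑ k ∈ range m, e k)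
    (hpost : ∀ k ∈ Ico (m + 1) n, e k ≤ a (k + 1)) :
    (1 + n * u) * ∑ k ∈ range n, e k ≤ n * u * ∑ k ∈ range (n + 1), a k := by
  set A := ∑ k ∈ range m, e k
  set B := ∑ k ∈ Ico (m + 1) n, e k
  have he_split : ∑ k ∈ range n, e k = A + e m + B := by
    rw [← sum_range_succ, sum_range_add_sum_Ico _ (by omega : m + 1 ≤ n)]
  have ha_split : ∑ k ∈ range (n + 1), a k =
      ∑ k ∈ range (m + 2), a k + ∑ k ∈ Ico (m + 2) (n + 1), a k :=
    (sum_range_add_sum_Ico _ (by omega)).symm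
  have hw : 0 ≤ u * V := (he m).trans (hle m hmn)
  have hA : A ≤ m * (u * V / 2) := by
    simpa using sum_le_card_nsmul (range m) e _ fun k hk => hpre k (mem_range.1 hk)
  have hB : B ≤ (n - (m + 1) : ℕ) * (u * V) := by
    simpa using sum_le_card_nsmul (Ico (m + 1) n) e _ fun k hk => hle k (mem_Ico.1 hk).2
  have hBa : B ≤ ∑ k ∈ Ico (m + 2) (n + 1), a k := by
    rw [← sum_Ico_add' a (m + 1) n 1]
    exact sum_le_sum hpost
  rw [Nat.cast_sub (by omega), Nat.cast_add, Nat.cast_one] at hB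
  have hcount : A + e m + B + 2 * (n * u) * A ≤ n * u * V := by
    nlinarith [mul_le_mul_of_nonneg_left hA (by positivity : (0 : ℝ) ≤ 2 * (n * u)),
      mul_nonneg (Nat.cast_nonneg m : (0 : ℝ) ≤ m) hw, hle m hmn]
  rw [he_split, ha_split]
  nlinarith [mul_le_mul_of_nonneg_left (by linarith : V + e m + B - A ≤
    ∑ k ∈ range (m + 2), a k + ∑ k ∈ Ico (m + 2) (n + 1), a k) (by positivity : (0 : ℝ) ≤ n * u)]

def rsumErr (fl : ℕ → ℝ → ℝ) (p : ℕ → ℝ) (k : ℕ) : ℝ :=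
  rsum fl p (k + 1) - (rsum fl p k + p (k + 1))

lemma rsum_sub_sum_eq (fl : ℕ → ℝ → ℝ) (p : ℕ → ℝ) (j : ℕ) :
    rsum fl p j - ∑ k ∈ range (j + 1), p k = ∑ k ∈ range j, rsumErr fl p k := by
  induction j with
  | zero => simp [rsum]
  | succ j ih => rw [sum_range_succ p (j + 1), sum_range_succ (rsumErr fl p), ← ih, rsumErr]; ring

lemma rsum_mem {F : Set ℝ} {fl : ℕ → ℝ → ℝ} {p : ℕ → ℝ} {n : ℕ}
    (hfl : ∀ k, 1 ≤ k → k ≤ n → RTN F (fl k)) (hp : p 0 ∈ F) {j : ℕ} (hj : j ≤ n) :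
    rsum fl p j ∈ F := by
  cases j with
  | zero => exact hp
  | succ j => exact (hfl (j + 1) (by omega) hj _).1

section RoundedSteps

variable {β μ : ℕ} {fl : ℕ → ℝ → ℝ} {p : ℕ → ℝ} {k : ℕ}

lemma rsumErr_eq_zero (hfl : RTN (PerfectF β μ) (fl (k + 1)))
    (ht : rsum fl p k + p (k + 1) = 0) : rsumErr fl p k = 0 := by
  rw [rsumErr, rsum, ht, hfl.map_zero zero_mem_perfectF, sub_zero]

lemma abs_rsumErr_le_mul_zpow (hβ : 2 ≤ β) {u : ℝ} (hu : u = 1 / (2 * (β : ℝ) ^ μ))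
    (hfl : RTN (PerfectF β μ) (fl (k + 1))) {E : ℤ}
    (hE : rsum fl p k + p (k + 1) ≠ 0 → Int.log β |rsum fl p k + p (k + 1)| ≤ E) :
    |rsumErr fl p k| ≤ u * (β : ℝ) ^ E := by
  have hu0 : 0 < u := by rw [hu]; positivity
  by_cases ht : rsum fl p k + p (k + 1) = 0
  · rw [rsumErr_eq_zero hfl ht, abs_zero]
    positivity
  · exact (hfl.abs_sub_le_mul_zpow_log hβ hu ht).trans <|
      mul_le_mul_of_nonneg_left (zpow_le_zpow_right₀ (by norm_cast; omega) (hE ht)) hu0.le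

end RoundedSteps

theorem abs_rsum_sub_sum_le {β μ n : ℕ} (hβ : 2 ≤ β) {u : ℝ} (hu : u = 1 / (2 * (β : ℝ) ^ μ))
    (hnu : 2 * n * u ≤ 1) {fl : ℕ → ℝ → ℝ}
    (hfl : ∀ k, 1 ≤ k → k ≤ n → RTN (PerfectF β μ) (fl k)) {p : ℕ → ℝ}
    (hp : p 0 ∈ PerfectF β μ) :
    |rsum fl p n - ∑ k ∈ range (n + 1), p k| ≤
      n * u / (1 + n * u) * ∑ k ∈ range (n + 1), |p k| := by
  have hu0 : 0 < u := by rw [hu]; positivity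
  have hβ0 : (β : ℝ) ≠ 0 := by positivity
  set t : ℕ → ℝ := fun k => rsum fl p k + p (k + 1)
  have hstep : ∀ k < n, RTN (PerfectF β μ) (fl (k + 1)) := fun k hk => hfl (k + 1) (by omega) hk
  rw [div_mul_eq_mul_div, le_div_iff₀ (by positivity), mul_comm, rsum_sub_sum_eq]
  refine (mul_le_mul_of_nonneg_left (abs_sum_le_sum_abs _ _) (by positivity)).trans ?_
  set K := (range n).filter (fun k => t k ≠ 0)
  rcases K.eq_empty_or_nonempty with hK | hK
  · have hzero : ∀ k ∈ range n, |rsumErr fl p k| = 0 := fun k hk => by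
      rw [rsumErr_eq_zero (hstep k (mem_range.1 hk))
        (by simpa [K, hk] using filter_eq_empty_iff.1 hK hk), abs_zero]
    rw [sum_eq_zero hzero, mul_zero]
    positivity
  obtain ⟨m, hmK, hmax, hfirst⟩ :=
    K.exists_mem_forall_le_forall_lt_lt (fun k => Int.log β |t k|) hK
  simp only [K, mem_filter, mem_range] at hmK hmax hfirst
  set M := Int.log β |t m|
  have htm : t m = ∑ k ∈ range (m + 2), p k + ∑ k ∈ range m, rsumErr fl p k := by
    rw [← rsum_sub_sum_eq, sum_range_succ p (m + 1)]; ring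
  refine sum_le_of_first_max hmK.1 hu0.le (by linarith) (fun k => abs_nonneg _) (V := β ^ M)
    (fun k hk => ?_) (fun k hk => ?_) ?_
    fun k hk => (hstep k (mem_Ico.1 hk).2).abs_add_sub_le (rsum_mem hfl hp (mem_Ico.1 hk).2.le) _
  · calc |rsumErr fl p k| ≤ u * (β : ℝ) ^ (M - 1) :=
          abs_rsumErr_le_mul_zpow hβ hu (hstep k (by omega))
            fun htk => Int.le_sub_one_of_lt (hfirst k ⟨by omega, htk⟩ hk)
      _ ≤ u * (β : ℝ) ^ M / 2 := by
        rw [zpow_sub_one₀ hβ0, mul_div_assoc, ← div_eq_mul_inv]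
        gcongr
        exact_mod_cast hβ
  · exact abs_rsumErr_le_mul_zpow hβ hu (hstep k hk) fun htk => hmax k ⟨hk, htk⟩
  · calc (β : ℝ) ^ M + |rsumErr fl p m| ≤ |t m| := by
          have : rsumErr fl p m = fl (m + 1) (t m) - t m := rfl
          linarith [this ▸ (hstep m hmK.1).abs_sub_le_abs_sub_zpow_log hβ hmK.2]
      _ ≤ _ := by
        rw [htm]
        exact (abs_add_le _ _).trans (add_le_add (abs_sum_le_sum_abs _ _) (abs_sum_le_sum_abs _ _))

lemma dot_coeff_le_succ (n : ℕ) {u : ℝ} (hu : 0 ≤ u) :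
    ((n : ℝ) + 1 + 3 * n * u) / (1 + (n + 1) * u + n * u ^ 2) ≤ n + 1 := by
  rw [div_le_iff₀ (by positivity)]
  have hn : (0 : ℝ) ≤ n := n.cast_nonneg
  nlinarith [sq_nonneg ((n : ℝ) - 1), mul_nonneg (mul_nonneg hn hu) hu]

theorem stmt19_general (β μ n : ℕ) (hβ : 2 ≤ β)
    (u : ℝ) (hu : u = 1 / (2 * (β : ℝ) ^ μ)) (hnu : 20 * (n : ℝ) * u ≤ 1)
    (fl : ℕ → ℝ → ℝ) (hfl : ∀ k, 1 ≤ k → k ≤ n → RTN (PerfectF β μ) (fl k))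
    (r : ℕ → ℝ → ℝ) (hr : ∀ k, k ≤ n → RTN (PerfectF β μ) (r k))
    (x y : ℕ → ℝ) :
    |rsum fl (fun k => r k (x k * y k)) n - ∑ k ∈ Finset.range (n + 1), x k * y k| ≤
      (((n : ℝ) + 1 + 3 * (n : ℝ) * u) / (1 + ((n : ℝ) + 1) * u + (n : ℝ) * u ^ 2)) * u *
        ∑ k ∈ Finset.range (n + 1), |x k * y k| ∧
    (((n : ℝ) + 1 + 3 * (n : ℝ) * u) / (1 + ((n : ℝ) + 1) * u + (n : ℝ) * u ^ 2)) * u *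
        ∑ k ∈ Finset.range (n + 1), |x k * y k| ≤
      ((n : ℝ) + 1) * u * ∑ k ∈ Finset.range (n + 1), |x k * y k| := by
  have hu0 : 0 < u := by rw [hu]; positivity
  set p := fun k => r k (x k * y k)
  set θ := u / (1 + u)
  have hp : ∀ k ∈ range (n + 1), |p k - x k * y k| ≤ θ * |x k * y k| := fun k hk =>
    (hr k (Nat.lt_succ_iff.1 (mem_range.1 hk))).abs_sub_le_div_one_add_mul hβ hu _
  have hsum := abs_rsum_sub_sum_le hβ hu (by linarith) hfl (hr 0 n.zero_le _).1 (p := p)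
  have hprod : |∑ k ∈ range (n + 1), p k - ∑ k ∈ range (n + 1), x k * y k| ≤
      θ * ∑ k ∈ range (n + 1), |x k * y k| := by
    rw [← sum_sub_distrib, mul_sum]
    exact (abs_sum_le_sum_abs _ _).trans (sum_le_sum hp)
  have hpabs : ∑ k ∈ range (n + 1), |p k| ≤ (1 + θ) * ∑ k ∈ range (n + 1), |x k * y k| := by
    rw [mul_sum]
    refine sum_le_sum fun k hk => ?_
    linarith [abs_sub_abs_le_abs_sub (p k) (x k * y k), hp k hk]
  refine ⟨?_, by gcongr; exact dot_coeff_le_succ n hu0.le⟩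
  calc _ ≤ |rsum fl p n - ∑ k ∈ range (n + 1), p k| +
        |∑ k ∈ range (n + 1), p k - ∑ k ∈ range (n + 1), x k * y k| := abs_sub_le _ _ _
    _ ≤ n * u / (1 + n * u) * ((1 + θ) * ∑ k ∈ range (n + 1), |x k * y k|) +
        θ * ∑ k ∈ range (n + 1), |x k * y k| := by gcongr; exact hsum.trans (by gcongr)
    _ = _ := by simp only [θ]; field_simp; ring

theorem stmt19 (β μ n : ℕ) (hβ : 2 ≤ β) (hμ : 1 ≤ μ) (hn : 1 ≤ n)
    (u : ℝ) (hu : u = 1 / (2 * (β : ℝ) ^ μ)) (hnu : 20 * (n : ℝ) * u ≤ 1)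
    (fl : ℕ → ℝ → ℝ) (hfl : ∀ k, 1 ≤ k → k ≤ n → RTN (PerfectF β μ) (fl k))
    (r : ℕ → ℝ → ℝ) (hr : ∀ k, k ≤ n → RTN (PerfectF β μ) (r k))
    (x y : ℕ → ℝ) :
    |rsum fl (fun k => r k (x k * y k)) n - ∑ k ∈ Finset.range (n + 1), x k * y k| ≤
      (((n : ℝ) + 1 + 3 * (n : ℝ) * u) / (1 + ((n : ℝ) + 1) * u + (n : ℝ) * u ^ 2)) * u *
        ∑ k ∈ Finset.range (n + 1), |x k * y k| ∧
    (((n : ℝ) + 1 + 3 * (n : ℝ) * u) / (1 + ((n : ℝ) + 1) * u + (n : ℝ) * u ^ 2)) * u *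
        ∑ k ∈ Finset.range (n + 1), |x k * y k| ≤
      ((n : ℝ) + 1) * u * ∑ k ∈ Finset.range (n + 1), |x k * y k| :=
  stmt19_general β μ n hβ u hu hnu fl hfl r hr x y
end
end
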